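/- The relation ≤ on G = {(x,x') : x ∈ S, x' ∈ V(x)} is a partial order: it is reflexive, antisymmetric (if (x,x') ≤ (y,y') and (y,y') ≤ (x,x') then x = y and x' = y'), and transitive. -/

import Mathlib

/-- `x'` is an inverse of `x` in a semigroup: `x·x'·x = x` and `x'·x·x' = x'`. -/
def IsInverse {S : Type*} [Semigroup S] (x x' : S) : Prop :=
  x * x' * x = x ∧ x' * x * x' = x'

/-- The order on pairs: `(x,x') ≤ (y,y)` iff `(xx')(yy') = (yy')(xx') = xx'`,
`(x'x)(y'y) = (y'y)(x'x) = x'x`, `x = (xx')·y` and `x' = y'·(xx')`. -/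
def ple {S : Type*} [Semigroup S] (x x' y y' : S) : Prop :=
  (x * x') * (y * y') = x * x' ∧ (y * y') * (x * x') = x * x' ∧
  (x' * x) * (y' * y) = x' * x ∧ (y' * y) * (x' * x) = x' * x ∧
  x = (x * x') * y ∧ x' = y' * (x * x')

section

variable {S : Type*} [Semigroup S] {x x' y y' z z' : S}

theorem IsInverse.symm (h : IsInverse x x') : IsInverse x' x :=
  ⟨h.2, h.1⟩

theorem IsInverse.isIdempotentElem_mul (h : IsInverse x x') : IsIdempotentElem (x * x') := by
  rw [IsIdempotentElem, ← mul_assoc, h.1]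

theorem mul_eq_self_trans {a b c : S} (hab : a * b = a) (hbc : b * c = b) : a * c = a := by
  rw [← hab, mul_assoc, hbc]

theorem mul_eq_self_trans' {a b c : S} (hba : b * a = a) (hcb : c * b = b) : c * a = a := by
  rw [← hba, ← mul_assoc, hcb]

theorem ple_refl (h : IsInverse x x') : ple x x' x x' :=
  have hxx' := h.isIdempotentElem_mul.eq
  have hx'x := h.symm.isIdempotentElem_mul.eq
  ⟨hxx', hxx', hx'x, hx'x, h.1.symm, by rw [← mul_assoc, h.2]⟩

theorem ple_antisymm (hy : IsInverse y y') (hxy : ple x x' y y') (hyx : ple y y' x x') :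
    x = y ∧ x' = y' := by
  have hxx' : x * x' = y * y' := hxy.1.symm.trans hyx.2.1
  constructor
  · rw [hxy.2.2.2.2.1, hxx', hy.1]
  · rw [hxy.2.2.2.2.2, hxx', ← mul_assoc, hy.2]

theorem ple_trans (hxy : ple x x' y y') (hyz : ple y y' z z') : ple x x' z z' := by
  obtain ⟨a1, a2, a3, a4, a5, a6⟩ := hxy
  obtain ⟨b1, b2, b3, b4, b5, b6⟩ := hyz
  refine ⟨mul_eq_self_trans a1 b1, mul_eq_self_trans' a2 b2,
    mul_eq_self_trans a3 b3, mul_eq_self_trans' a4 b4, ?_, ?_⟩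
  · calc x = (x * x') * ((y * y') * z) := by rw [← b5, ← a5]
      _ = (x * x') * z := by rw [← mul_assoc, a1]
  · calc x' = (z' * (y * y')) * (x * x') := by rw [← b6, ← a6]
      _ = z' * (x * x') := by rw [mul_assoc, a2]

end

theorem ple_is_partial_order_general {S : Type*} [Semigroup S] :
    (∀ x x' : S, IsInverse x x' → ple x x' x x') ∧
    (∀ x x' y y' : S, IsInverse x x' → IsInverse y y' →
      ple x x' y y' → ple y y' x x' → x = y ∧ x' = y') ∧
    (∀ x x' y y' z z' : S, IsInverse x x' → IsInverse y y' → IsInverse z z' →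
      ple x x' y y' → ple y y' z z' → ple x x' z z') :=
  ⟨fun _ _ => ple_refl,
    fun _ _ _ _ _ hy => ple_antisymm hy,
    fun _ _ _ _ _ _ _ _ _ => ple_trans⟩

/-- The relation `≤` on `G = {(x,x') : x ∈ S, x' ∈ V(x)}` is a partial order:
reflexive, antisymmetric, and transitive. -/
theorem ple_is_partial_order {S : Type*} [Semigroup S]
    (hreg : ∀ a : S, ∃ b : S, a * b * a = a ∧ b * a * b = b) :
    (∀ x x' : S, IsInverse x x' → ple x x' x x') ∧
    (∀ x x' y y' : S, IsInverse x x' → IsInverse y y' →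
      ple x x' y y' → ple y y' x x' → x = y ∧ x' = y') ∧
    (∀ x x' y y' z z' : S, IsInverse x x' → IsInverse y y' → IsInverse z z' →
      ple x x' y y' → ple y y' z z' → ple x x' z z') :=
  ple_is_partial_order_general
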